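/- In the two-player interconnected contest with Tullock contest success function with parameter γ ∈ (0,1], for any pair (y*_1, y*_2) ∈ T_1 × T_2 of equilibrium effective-effort vectors (possibly arising from different equilibria), any player i ∈ {1,2}, any battlefield k ∈ B, and any other equilibrium effective-effort vector y**_{-i} ∈ T_{-i} of the opponent, either y*_i^k = 0 or y*_{-i}^k = y**_{-i}^k. -/

import Mathlib

/-
The contest is strategically zero-sum: for nonnegative efforts the two payoffs add up to the
total value, minus both costs, minus the value of the battlefields that neither player
contests. A best response can claim all uncontested battlefields at arbitrarily small extra
cost, so comparing best responses with the zero-sum identity shows, as for zero-sum games, that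
equilibria are interchangeable. For `γ ≤ 1` the Tullock success function is concave in the own
effective effort, and strictly so against a positive opponent effort; averaging two best
responses to the same strategy therefore shows that their effective efforts agree wherever the
opponent is active.
-/

open Finset Matrix

/-- Effective effort of a player with spillover matrix `ρ` and effort vector `e`
at battlefield `k`: `y^k = e^k + ∑_{l ≠ k} ρ^{l,k} e^l`. -/
noncomputable def effY {m : ℕ} (ρ : Matrix (Fin m) (Fin m) ℝ) (e : Fin m → ℝ)
    (k : Fin m) : ℝ :=
  e k + ∑ l ∈ Finset.univ.erase k, ρ l k * e l

/-- Tullock contest success function with parameter `γ`.  When both effective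
efforts are `0` this gives `0/0 = 0`, matching the convention. -/
noncomputable def tullock (γ y₁ y₂ : ℝ) : ℝ :=
  y₁ ^ γ / (y₁ ^ γ + y₂ ^ γ)

/-- Payoff of player `i` in the interconnected contest. -/
noncomputable def payoff {m : ℕ} (γ : ℝ) (v : Fin m → ℝ) (c : Fin 2 → ℝ)
    (ρ : Fin 2 → Matrix (Fin m) (Fin m) ℝ) (e : Fin 2 → Fin m → ℝ) (i : Fin 2) : ℝ :=
  (∑ k, v k * tullock γ (effY (ρ i) (e i) k) (effY (ρ (1 - i)) (e (1 - i)) k))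
    - c i * ∑ k, e i k

/-- Pure strategy Nash equilibrium of the interconnected contest:
nonnegative efforts, and no profitable deviation to any nonnegative effort vector. -/
def IsNashEq {m : ℕ} (γ : ℝ) (v : Fin m → ℝ) (c : Fin 2 → ℝ)
    (ρ : Fin 2 → Matrix (Fin m) (Fin m) ℝ) (e : Fin 2 → Fin m → ℝ) : Prop :=
  (∀ i k, 0 ≤ e i k) ∧
  ∀ (i : Fin 2) (e' : Fin m → ℝ), (∀ k, 0 ≤ e' k) →
    payoff γ v c ρ (Function.update e i e') i ≤ payoff γ v c ρ e i

/-- Winning probability of player `i` at battlefield `k` under profile `e`. -/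
noncomputable def eqProb {m : ℕ} (γ : ℝ) (ρ : Fin 2 → Matrix (Fin m) (Fin m) ℝ)
    (e : Fin 2 → Fin m → ℝ) (i : Fin 2) (k : Fin m) : ℝ :=
  tullock γ (effY (ρ i) (e i) k) (effY (ρ (1 - i)) (e (1 - i)) k)


open Filter Topology Set

lemma div_add_le_div_add {B t t' : ℝ} (hB : 0 ≤ B) (ht : 0 ≤ t) (h : t ≤ t') :
    t / (t + B) ≤ t' / (t' + B) := by
  rcases (add_nonneg ht hB).eq_or_lt with h0 | h0
  · rw [← h0, div_zero]
    exact div_nonneg (ht.trans h) (by linarith)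
  · rw [div_le_div_iff₀ h0 (by linarith)]
    nlinarith

lemma div_add_midpoint_lt {B t t' : ℝ} (hB : 0 < B) (ht : 0 ≤ t) (ht' : 0 ≤ t')
    (hne : t ≠ t') :
    (t / (t + B) + t' / (t' + B)) / 2 < (t + t') / 2 / ((t + t') / 2 + B) := by
  have gap : (t + t') / 2 / ((t + t') / 2 + B) - (t / (t + B) + t' / (t' + B)) / 2
      = B * (t - t') ^ 2 / (2 * (t + B) * (t' + B) * (t + t' + 2 * B)) := by
    field_simp
    ring
  have : 0 < B * (t - t') ^ 2 / (2 * (t + B) * (t' + B) * (t + t' + 2 * B)) := by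
    have := sub_ne_zero.2 hne
    positivity
  linarith

lemma le_of_forall_pos_sub_mul_le {a b C : ℝ} (h : ∀ δ > 0, a - C * δ ≤ b) : a ≤ b := by
  have hlim : Tendsto (fun δ => a - C * δ) (𝓝[>] 0) (𝓝 a) :=
    ((by fun_prop : Continuous fun δ : ℝ => a - C * δ).tendsto' 0 a (by simp)).mono_left
      nhdsWithin_le_nhds
  exact le_of_tendsto hlim (eventually_nhdsWithin_of_forall h)

lemma Real.rpow_midpoint_le {γ x x' : ℝ} (hγ0 : 0 ≤ γ) (hγ1 : γ ≤ 1) (hx : 0 ≤ x)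
    (hx' : 0 ≤ x') : (x ^ γ + x' ^ γ) / 2 ≤ ((x + x') / 2) ^ γ := by
  have := (Real.concaveOn_rpow hγ0 hγ1).2 hx hx' (by norm_num : (0 : ℝ) ≤ 1 / 2)
    (by norm_num : (0 : ℝ) ≤ 1 / 2) (by norm_num)
  simp only [smul_eq_mul] at this
  rw [show (x + x') / 2 = 1 / 2 * x + 1 / 2 * x' by ring]
  linarith

section Tullock

variable {γ x x' b : ℝ}

lemma tullock_zero_left (hγ : 0 < γ) (b : ℝ) : tullock γ 0 b = 0 := by
  simp [tullock, Real.zero_rpow hγ.ne']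

lemma tullock_zero_right (hγ : 0 < γ) (hx : 0 < x) : tullock γ x 0 = 1 := by
  simp [tullock, Real.zero_rpow hγ.ne', (Real.rpow_pos_of_pos hx γ).ne']

lemma tullock_le_one (hx : 0 ≤ x) (hb : 0 ≤ b) : tullock γ x b ≤ 1 :=
  div_le_one_of_le₀ (le_add_of_nonneg_right (Real.rpow_nonneg hb γ))
    (add_nonneg (Real.rpow_nonneg hx γ) (Real.rpow_nonneg hb γ))

lemma tullock_add_tullock (hγ : 0 < γ) (hx : 0 ≤ x) (hb : 0 ≤ b) :
    tullock γ x b + tullock γ b x = if x = 0 ∧ b = 0 then 0 else 1 := by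
  split_ifs with h
  · simp [h.1, h.2, tullock_zero_left hγ]
  · have hpos : 0 < x ^ γ + b ^ γ := by
      rcases not_and_or.1 h with hx0 | hb0
      · exact add_pos_of_pos_of_nonneg (Real.rpow_pos_of_pos (hx.lt_of_ne' hx0) γ)
          (Real.rpow_nonneg hb γ)
      · exact add_pos_of_nonneg_of_pos (Real.rpow_nonneg hx γ)
          (Real.rpow_pos_of_pos (hb.lt_of_ne' hb0) γ)
    rw [tullock, tullock, add_comm (b ^ γ), ← add_div, div_self hpos.ne']

lemma tullock_le_tullock (hγ : 0 < γ) (hx : 0 ≤ x) (hb : 0 ≤ b) (h : x ≤ x') :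
    tullock γ x b ≤ tullock γ x' b :=
  div_add_le_div_add (Real.rpow_nonneg hb γ) (Real.rpow_nonneg hx γ)
    (Real.rpow_le_rpow hx h hγ.le)

lemma tullock_midpoint_lt (hγ0 : 0 < γ) (hγ1 : γ ≤ 1) (hx : 0 ≤ x) (hx' : 0 ≤ x')
    (hb : 0 < b) (hne : x ≠ x') :
    (tullock γ x b + tullock γ x' b) / 2 < tullock γ ((x + x') / 2) b := by
  have hne' : x ^ γ ≠ x' ^ γ := fun h => hne ((Real.rpow_left_inj hx hx' hγ0.ne').1 h)
  calc (tullock γ x b + tullock γ x' b) / 2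
      < (x ^ γ + x' ^ γ) / 2 / ((x ^ γ + x' ^ γ) / 2 + b ^ γ) :=
        div_add_midpoint_lt (Real.rpow_pos_of_pos hb γ) (Real.rpow_nonneg hx γ)
          (Real.rpow_nonneg hx' γ) hne'
    _ ≤ tullock γ ((x + x') / 2) b :=
        div_add_le_div_add (Real.rpow_nonneg hb.le γ)
          (div_nonneg (add_nonneg (Real.rpow_nonneg hx γ) (Real.rpow_nonneg hx' γ)) two_pos.le)
          (Real.rpow_midpoint_le hγ0.le hγ1 hx hx')

lemma tullock_midpoint_le (hγ0 : 0 < γ) (hγ1 : γ ≤ 1) (hx : 0 ≤ x) (hx' : 0 ≤ x')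
    (hb : 0 ≤ b) :
    (tullock γ x b + tullock γ x' b) / 2 ≤ tullock γ ((x + x') / 2) b := by
  rcases hb.eq_or_lt with rfl | hb
  · rcases (add_nonneg hx hx').eq_or_lt with h | h
    · obtain ⟨rfl, rfl⟩ : x = 0 ∧ x' = 0 := ⟨by linarith, by linarith⟩
      simp [tullock_zero_left hγ0]
    · rw [tullock_zero_right (x := (x + x') / 2) hγ0 (by linarith)]
      linarith [tullock_le_one (γ := γ) hx le_rfl, tullock_le_one (γ := γ) hx' le_rfl]
  · rcases eq_or_ne x x' with rfl | hne
    · simp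
    · exact (tullock_midpoint_lt hγ0 hγ1 hx hx' hb hne).le

end Tullock

section EffY

variable {m : ℕ} {R : Matrix (Fin m) (Fin m) ℝ}

lemma effY_nonneg (hR : ∀ k l, 0 ≤ R k l) {e : Fin m → ℝ} (he : 0 ≤ e) (k : Fin m) :
    0 ≤ effY R e k :=
  add_nonneg (he k) (sum_nonneg fun l _ => mul_nonneg (hR l k) (he l))

lemma effY_lt_effY_add_const (hR : ∀ k l, 0 ≤ R k l) (e : Fin m → ℝ) {δ : ℝ} (hδ : 0 < δ)
    (k : Fin m) : effY R e k < effY R (fun l => e l + δ) k := by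
  have : ∑ l ∈ univ.erase k, R l k * e l ≤ ∑ l ∈ univ.erase k, R l k * (e l + δ) :=
    sum_le_sum fun l _ => mul_le_mul_of_nonneg_left (by linarith) (hR l k)
  simp only [effY]
  linarith

lemma effY_midpoint (u w : Fin m → ℝ) (k : Fin m) :
    effY R (fun l => (u l + w l) / 2) k = (effY R u k + effY R w k) / 2 := by
  simp only [effY, mul_div_assoc', mul_add, add_div, sum_add_distrib, ← sum_div]
  ring

end EffY

noncomputable def unclaimedValue {m : ℕ} (v y₁ y₂ : Fin m → ℝ) : ℝ :=
  ∑ k with y₁ k = 0 ∧ y₂ k = 0, v k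

/-- `b` is the opponent's vector of effective efforts. -/
noncomputable def contestPayoff {m : ℕ} (γ : ℝ) (v : Fin m → ℝ) (c : ℝ)
    (R : Matrix (Fin m) (Fin m) ℝ) (x b : Fin m → ℝ) : ℝ :=
  ∑ k, v k * tullock γ (effY R x k) (b k) - c * ∑ k, x k

section Payoff

variable {m : ℕ} {γ : ℝ} {v : Fin m → ℝ} {c c₁ c₂ : ℝ} {R R₁ R₂ : Matrix (Fin m) (Fin m) ℝ}
  {x z u w b y₁ y₂ : Fin m → ℝ}

lemma unclaimedValue_comm : unclaimedValue v y₁ y₂ = unclaimedValue v y₂ y₁ := by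
  simp only [unclaimedValue, and_comm]

lemma unclaimedValue_nonneg (hv : 0 ≤ v) : 0 ≤ unclaimedValue v y₁ y₂ :=
  sum_nonneg fun k _ => hv k

lemma sum_tullock_add_sum_tullock (hγ : 0 < γ) (hy₁ : 0 ≤ y₁) (hy₂ : 0 ≤ y₂) :
    ∑ k, v k * tullock γ (y₁ k) (y₂ k) + ∑ k, v k * tullock γ (y₂ k) (y₁ k)
      = ∑ k, v k - unclaimedValue v y₁ y₂ := by
  rw [← sum_add_distrib, unclaimedValue, sum_filter, ← sum_sub_distrib]
  refine sum_congr rfl fun k _ => ?_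
  rw [← mul_add, tullock_add_tullock hγ (hy₁ k) (hy₂ k)]
  split_ifs <;> ring

lemma contestPayoff_add_contestPayoff (hγ : 0 < γ) (hR₁ : ∀ k l, 0 ≤ R₁ k l)
    (hR₂ : ∀ k l, 0 ≤ R₂ k l) (hx : 0 ≤ x) (hz : 0 ≤ z) :
    contestPayoff γ v c₁ R₁ x (effY R₂ z) + contestPayoff γ v c₂ R₂ z (effY R₁ x)
      = ∑ k, v k - unclaimedValue v (effY R₁ x) (effY R₂ z)
        - c₁ * ∑ k, x k - c₂ * ∑ k, z k := by
  have := sum_tullock_add_sum_tullock (v := v) hγ (effY_nonneg hR₁ hx) (effY_nonneg hR₂ hz)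
  simp only [contestPayoff]
  linarith

lemma contestPayoff_add_unclaimedValue_sub_le (hγ : 0 < γ) (hv : 0 ≤ v)
    (hR : ∀ k l, 0 ≤ R k l) (hx : 0 ≤ x) (hb : 0 ≤ b) {δ : ℝ} (hδ : 0 < δ) :
    contestPayoff γ v c R x b + unclaimedValue v (effY R x) b - c * m * δ
      ≤ contestPayoff γ v c R (fun l => x l + δ) b := by
  have gain : ∑ k, v k * tullock γ (effY R x k) (b k) + unclaimedValue v (effY R x) b
      ≤ ∑ k, v k * tullock γ (effY R (fun l => x l + δ) k) (b k) := by
    rw [unclaimedValue, sum_filter, ← sum_add_distrib]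
    refine sum_le_sum fun k _ => ?_
    have hlt := effY_lt_effY_add_const hR x hδ k
    split_ifs with hk
    · rw [hk.1, hk.2, tullock_zero_left hγ, tullock_zero_right hγ (by linarith [hk.1])]
      simp
    · rw [add_zero]
      exact mul_le_mul_of_nonneg_left
        (tullock_le_tullock hγ (effY_nonneg hR hx k) (hb k) hlt.le) (hv k)
  have cost : ∑ l, (x l + δ) = ∑ l, x l + m * δ := by simp [sum_add_distrib]
  simp only [contestPayoff, cost]
  linarith

/-- Adding a vanishing effort everywhere wins every unclaimed battlefield. -/
lemma IsMaxOn.contestPayoff_add_unclaimedValue_le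
    (hu : IsMaxOn (contestPayoff γ v c R · b) (Ici 0) u) (hγ : 0 < γ) (hv : 0 ≤ v)
    (hR : ∀ k l, 0 ≤ R k l) (hx : 0 ≤ x) (hb : 0 ≤ b) :
    contestPayoff γ v c R x b + unclaimedValue v (effY R x) b ≤ contestPayoff γ v c R u b :=
  le_of_forall_pos_sub_mul_le (C := c * m) fun δ hδ => by
    exact (contestPayoff_add_unclaimedValue_sub_le hγ hv hR hx hb hδ).trans
      (isMaxOn_iff.1 hu _ fun l => add_nonneg (hx l) hδ.le)

lemma contestPayoff_midpoint_lt (hγ0 : 0 < γ) (hγ1 : γ ≤ 1) (hv : ∀ k, 0 < v k)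
    (hR : ∀ k l, 0 ≤ R k l) (hu : 0 ≤ u) (hw : 0 ≤ w) (hb : 0 ≤ b) {k : Fin m}
    (hbk : 0 < b k) (hne : effY R u k ≠ effY R w k) :
    (contestPayoff γ v c R u b + contestPayoff γ v c R w b) / 2
      < contestPayoff γ v c R (fun l => (u l + w l) / 2) b := by
  have gain : (∑ l, v l * tullock γ (effY R u l) (b l)
        + ∑ l, v l * tullock γ (effY R w l) (b l)) / 2
      < ∑ l, v l * tullock γ (effY R (fun l => (u l + w l) / 2) l) (b l) := by
    rw [← sum_add_distrib, sum_div]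
    simp only [effY_midpoint, ← mul_add, mul_div_assoc]
    exact sum_lt_sum
      (fun l _ => mul_le_mul_of_nonneg_left (tullock_midpoint_le hγ0 hγ1
        (effY_nonneg hR hu l) (effY_nonneg hR hw l) (hb l)) (hv l).le)
      ⟨k, mem_univ k, mul_lt_mul_of_pos_left (tullock_midpoint_lt hγ0 hγ1
        (effY_nonneg hR hu k) (effY_nonneg hR hw k) hbk hne) (hv k)⟩
  have cost : ∑ l, (u l + w l) / 2 = (∑ l, u l + ∑ l, w l) / 2 := by
    rw [← sum_div, sum_add_distrib]
  simp only [contestPayoff, cost]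
  linarith

lemma effY_eq_of_isMaxOn_contestPayoff (hγ0 : 0 < γ) (hγ1 : γ ≤ 1) (hv : ∀ k, 0 < v k)
    (hR : ∀ k l, 0 ≤ R k l) (hu : IsMaxOn (contestPayoff γ v c R · b) (Ici 0) u)
    (hw : IsMaxOn (contestPayoff γ v c R · b) (Ici 0) w) (hu0 : 0 ≤ u) (hw0 : 0 ≤ w)
    (hb : 0 ≤ b) {k : Fin m} (hk : b k ≠ 0) : effY R u k = effY R w k := by
  by_contra hne
  have hmid := contestPayoff_midpoint_lt (c := c) hγ0 hγ1 hv hR hu0 hw0 hb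
    ((hb k).lt_of_ne' hk) hne
  have hwu := isMaxOn_iff.1 hu w hw0
  have huw := isMaxOn_iff.1 hw u hu0
  have := isMaxOn_iff.1 hu _ fun l => div_nonneg (add_nonneg (hu0 l) (hw0 l)) two_pos.le
  linarith

end Payoff

structure IsEquilibrium {m : ℕ} (γ : ℝ) (v : Fin m → ℝ) (c₁ c₂ : ℝ)
    (R₁ R₂ : Matrix (Fin m) (Fin m) ℝ) (x₁ x₂ : Fin m → ℝ) : Prop where
  nonneg₁ : 0 ≤ x₁
  nonneg₂ : 0 ≤ x₂
  isMaxOn₁ : IsMaxOn (contestPayoff γ v c₁ R₁ · (effY R₂ x₂)) (Ici 0) x₁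
  isMaxOn₂ : IsMaxOn (contestPayoff γ v c₂ R₂ · (effY R₁ x₁)) (Ici 0) x₂

section Equilibrium

variable {m : ℕ} {γ : ℝ} {v : Fin m → ℝ} {c₁ c₂ : ℝ} {R₁ R₂ : Matrix (Fin m) (Fin m) ℝ}
  {a₁ a₂ b₁ b₂ x₁ x₂ x₂' : Fin m → ℝ}

lemma isEquilibrium_comm :
    IsEquilibrium γ v c₁ c₂ R₁ R₂ x₁ x₂ ↔ IsEquilibrium γ v c₂ c₁ R₂ R₁ x₂ x₁ :=
  ⟨fun h => ⟨h.2, h.1, h.4, h.3⟩, fun h => ⟨h.2, h.1, h.4, h.3⟩⟩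

/-- Summing the four best-response inequalities and the four zero-sum identities forces all
unclaimed values to vanish and every inequality to be tight. -/
theorem IsEquilibrium.cross (ha : IsEquilibrium γ v c₁ c₂ R₁ R₂ a₁ a₂)
    (hb : IsEquilibrium γ v c₁ c₂ R₁ R₂ b₁ b₂) (hγ : 0 < γ) (hv : 0 ≤ v)
    (hR₁ : ∀ k l, 0 ≤ R₁ k l) (hR₂ : ∀ k l, 0 ≤ R₂ k l) :
    IsEquilibrium γ v c₁ c₂ R₁ R₂ a₁ b₂ := by
  have K₁ := hb.isMaxOn₁.contestPayoff_add_unclaimedValue_le hγ hv hR₁ ha.nonneg₁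
    (effY_nonneg hR₂ hb.nonneg₂)
  have K₂ := ha.isMaxOn₂.contestPayoff_add_unclaimedValue_le hγ hv hR₂ hb.nonneg₂
    (effY_nonneg hR₁ ha.nonneg₁)
  have K₃ := ha.isMaxOn₁.contestPayoff_add_unclaimedValue_le hγ hv hR₁ hb.nonneg₁
    (effY_nonneg hR₂ ha.nonneg₂)
  have K₄ := hb.isMaxOn₂.contestPayoff_add_unclaimedValue_le hγ hv hR₂ ha.nonneg₂
    (effY_nonneg hR₁ hb.nonneg₁)
  rw [unclaimedValue_comm] at K₂ K₄
  have Sa := contestPayoff_add_contestPayoff (v := v) (c₁ := c₁) (c₂ := c₂) hγ hR₁ hR₂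
    ha.nonneg₁ ha.nonneg₂
  have Sb := contestPayoff_add_contestPayoff (v := v) (c₁ := c₁) (c₂ := c₂) hγ hR₁ hR₂
    hb.nonneg₁ hb.nonneg₂
  have Sab := contestPayoff_add_contestPayoff (v := v) (c₁ := c₁) (c₂ := c₂) hγ hR₁ hR₂
    ha.nonneg₁ hb.nonneg₂
  have Sba := contestPayoff_add_contestPayoff (v := v) (c₁ := c₁) (c₂ := c₂) hγ hR₁ hR₂
    hb.nonneg₁ ha.nonneg₂
  have := unclaimedValue_nonneg (y₁ := effY R₁ a₁) (y₂ := effY R₂ a₂) hv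
  have := unclaimedValue_nonneg (y₁ := effY R₁ b₁) (y₂ := effY R₂ b₂) hv
  have := unclaimedValue_nonneg (y₁ := effY R₁ a₁) (y₂ := effY R₂ b₂) hv
  have := unclaimedValue_nonneg (y₁ := effY R₁ b₁) (y₂ := effY R₂ a₂) hv
  have tight₁ : contestPayoff γ v c₁ R₁ b₁ (effY R₂ b₂)
      ≤ contestPayoff γ v c₁ R₁ a₁ (effY R₂ b₂) := by linarith
  have tight₂ : contestPayoff γ v c₂ R₂ a₂ (effY R₁ a₁)
      ≤ contestPayoff γ v c₂ R₂ b₂ (effY R₁ a₁) := by linarith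
  exact ⟨ha.nonneg₁, hb.nonneg₂,
    isMaxOn_iff.2 fun x hx => (isMaxOn_iff.1 hb.isMaxOn₁ x hx).trans tight₁,
    isMaxOn_iff.2 fun x hx => (isMaxOn_iff.1 ha.isMaxOn₂ x hx).trans tight₂⟩

theorem IsEquilibrium.effY_eq_of_ne_zero (h : IsEquilibrium γ v c₁ c₂ R₁ R₂ x₁ x₂)
    (h' : IsEquilibrium γ v c₁ c₂ R₁ R₂ x₁ x₂') (hγ0 : 0 < γ) (hγ1 : γ ≤ 1)
    (hv : ∀ k, 0 < v k) (hR₁ : ∀ k l, 0 ≤ R₁ k l) (hR₂ : ∀ k l, 0 ≤ R₂ k l) {k : Fin m}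
    (hk : effY R₁ x₁ k ≠ 0) : effY R₂ x₂ k = effY R₂ x₂' k :=
  effY_eq_of_isMaxOn_contestPayoff hγ0 hγ1 hv hR₂ h.isMaxOn₂ h'.isMaxOn₂ h.nonneg₂ h'.nonneg₂
    (effY_nonneg hR₁ h.nonneg₁) hk

end Equilibrium

lemma payoff_update_self {m : ℕ} (γ : ℝ) (v : Fin m → ℝ) (c : Fin 2 → ℝ)
    (ρ : Fin 2 → Matrix (Fin m) (Fin m) ℝ) (e : Fin 2 → Fin m → ℝ) (i : Fin 2) (x : Fin m → ℝ) :
    payoff γ v c ρ (Function.update e i x) i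
      = contestPayoff γ v (c i) (ρ i) x (effY (ρ (1 - i)) (e (1 - i))) := by
  have : 1 - i ≠ i := by fin_cases i <;> decide
  simp [payoff, contestPayoff, Function.update_of_ne this]

theorem isNashEq_iff_isEquilibrium {m : ℕ} {γ : ℝ} {v : Fin m → ℝ} {c : Fin 2 → ℝ}
    {ρ : Fin 2 → Matrix (Fin m) (Fin m) ℝ} {e : Fin 2 → Fin m → ℝ} (i : Fin 2) :
    IsNashEq γ v c ρ e ↔
      IsEquilibrium γ v (c i) (c (1 - i)) (ρ i) (ρ (1 - i)) (e i) (e (1 - i)) := by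
  have h0 : IsNashEq γ v c ρ e ↔ IsEquilibrium γ v (c 0) (c 1) (ρ 0) (ρ 1) (e 0) (e 1) := by
    simp only [IsNashEq, Fin.forall_fin_two, payoff_update_self, sub_zero, sub_self]
    exact ⟨fun ⟨⟨h₁, h₂⟩, h₃, h₄⟩ => ⟨h₁, h₂, isMaxOn_iff.2 h₃, isMaxOn_iff.2 h₄⟩,
      fun ⟨h₁, h₂, h₃, h₄⟩ => ⟨⟨h₁, h₂⟩, isMaxOn_iff.1 h₃, isMaxOn_iff.1 h₄⟩⟩
  fin_cases i
  · exact h0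
  · simpa using h0.trans isEquilibrium_comm

theorem equilibrium_effective_effort_dichotomy_general (m : ℕ) (γ : ℝ) (hγ0 : 0 < γ) (hγ1 : γ ≤ 1)
    (v : Fin m → ℝ) (hv : ∀ k, 0 < v k)
    (c : Fin 2 → ℝ)
    (ρ : Fin 2 → Matrix (Fin m) (Fin m) ℝ)
    (hρ : ∀ i k l, 0 ≤ ρ i k l)
    (eA eB eC : Fin 2 → Fin m → ℝ)
    (hA : IsNashEq γ v c ρ eA) (hB : IsNashEq γ v c ρ eB)
    (hC : IsNashEq γ v c ρ eC) (i : Fin 2) (k : Fin m) :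
    effY (ρ i) (![eA 0, eB 1] i) k = 0 ∨
    effY (ρ (1 - i)) (![eA 0, eB 1] (1 - i)) k
      = effY (ρ (1 - i)) (eC (1 - i)) k := by
  have hv0 : 0 ≤ v := fun k => (hv k).le
  have hAB : IsNashEq γ v c ρ ![eA 0, eB 1] := by
    rw [isNashEq_iff_isEquilibrium 0] at hA hB ⊢
    exact hA.cross hB hγ0 hv0 (hρ 0) (hρ 1)
  rw [isNashEq_iff_isEquilibrium i] at hAB hC
  exact or_iff_not_imp_left.2 fun hk => hAB.effY_eq_of_ne_zero
    (hAB.cross hC hγ0 hv0 (hρ i) (hρ (1 - i))) hγ0 hγ1 hv (hρ i) (hρ (1 - i)) hk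

/-- for any pair of equilibrium effective-effort vectors
(possibly arising from different equilibria `eA`, `eB`), any player `i`, any
battlefield `k`, and any other equilibrium effective-effort vector of the
opponent (arising from equilibrium `eC`), either the `i`-component is zero at
`k` or the opponent components agree at `k`. -/
theorem equilibrium_effective_effort_dichotomy (m : ℕ) (γ : ℝ) (hγ0 : 0 < γ) (hγ1 : γ ≤ 1)
    (v : Fin m → ℝ) (hv : ∀ k, 0 < v k)
    (c : Fin 2 → ℝ) (hc : ∀ i, 0 < c i)
    (ρ : Fin 2 → Matrix (Fin m) (Fin m) ℝ)
    (hρ : ∀ i k l, 0 ≤ ρ i k l) (hρd : ∀ i k, ρ i k k = 0)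
    (eA eB eC : Fin 2 → Fin m → ℝ)
    (hA : IsNashEq γ v c ρ eA) (hB : IsNashEq γ v c ρ eB)
    (hC : IsNashEq γ v c ρ eC) (i : Fin 2) (k : Fin m) :
    effY (ρ i) (![eA 0, eB 1] i) k = 0 ∨
    effY (ρ (1 - i)) (![eA 0, eB 1] (1 - i)) k
      = effY (ρ (1 - i)) (eC (1 - i)) k :=
  equilibrium_effective_effort_dichotomy_general m γ hγ0 hγ1 v hv c ρ hρ eA eB eC hA hB hC i k
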